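/- There exists a measure μ on the measurable space (ℕ, P(ℕ)) (where P(ℕ) is the σ-algebra of all subsets of ℕ) such that (ℕ, P(ℕ), μ) is partitionable: for every sequence (a_n)_{n∈ℕ} of nonnegative real numbers there exists a sequence (A_n)_{n∈ℕ} of pairwise disjoint subsets of ℕ with μ(A_n) = a_n for all n. -/

import Mathlib

/-!
Give the point `(n, z)` of `ℕ × ℤ` mass `2 ^ z` and transport this measure to `ℕ` along a
bijection. By binary expansion every `x ≥ 0` is a sum of distinct powers `2 ^ z`, `z ∈ ℤ`, so
the column `{n} × ℤ` contains a set of measure `a n`; distinct columns are disjoint.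
-/

open MeasureTheory

/-- A measure space is partitionable if every sequence of nonnegative reals is attained as
the measures of a sequence of pairwise disjoint measurable sets. -/
def Partitionable {Ω : Type*} [MeasurableSpace Ω] (μ : Measure Ω) : Prop :=
  ∀ a : ℕ → ℝ, (∀ n, 0 ≤ a n) → ∃ A : ℕ → Set Ω,
    (∀ n, MeasurableSet (A n)) ∧ (∀ m n, m ≠ n → Disjoint (A m) (A n)) ∧
    ∀ n, μ (A n) = ENNReal.ofReal (a n)

open Set

theorem exists_set_nat_hasSum_indicator_inv_two_pow {y : ℝ} (hy : y ∈ Ico 0 1) :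
    ∃ T : Set ℕ, HasSum (T.indicator fun i => ((2 : ℝ) ^ (i + 1))⁻¹) y := by
  refine ⟨{i | Real.digits y 2 i = 1}, ?_⟩
  convert Real.hasSum_ofDigitsTerm_digits y one_lt_two hy using 1
  ext i
  simp only [Real.ofDigitsTerm, indicator_apply, mem_ofPred_eq]
  rcases Fin.exists_fin_two.mp ⟨Real.digits y 2 i, rfl⟩ with h | h <;> simp [h]

theorem exists_set_int_hasSum_indicator_two_zpow {x : ℝ} (hx : 0 ≤ x) :
    ∃ S : Set ℤ, HasSum (S.indicator fun z => (2 : ℝ) ^ z) x := by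
  obtain ⟨N, hN⟩ := pow_unbounded_of_one_lt x one_lt_two
  have hy : x / 2 ^ N ∈ Ico 0 1 := ⟨by positivity, (div_lt_one (by positivity)).mpr hN⟩
  obtain ⟨T, hT⟩ := exists_set_nat_hasSum_indicator_inv_two_pow hy
  set g : ℕ → ℤ := fun i => N - (i + 1 : ℕ)
  have hg : Function.Injective g := fun i j h => by simp only [g] at h; omega
  refine ⟨g '' T, (hg.hasSum_iff fun z hz => indicator_of_notMem
    (fun hzT => hz (image_subset_range g T hzT)) _).mp ?_⟩
  have hscale : HasSum (fun i => 2 ^ N * T.indicator (fun i => ((2 : ℝ) ^ (i + 1))⁻¹) i) x := by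
    have := hT.mul_left (2 ^ N)
    rwa [show (2 : ℝ) ^ N * (x / 2 ^ N) = x from mul_div_cancel₀ x (by positivity)] at this
  convert hscale using 1
  ext i
  rw [Function.comp_apply, indicator_image hg, ← indicator_const_mul]
  congr 1
  ext j
  rw [Function.comp_apply, zpow_sub₀ (two_ne_zero' ℝ), zpow_natCast, zpow_natCast, div_eq_mul_inv]

theorem Partitionable.map {α β : Type*} [MeasurableSpace α] [MeasurableSpace β] {μ : Measure α}
    (hμ : Partitionable μ) {f : α → β} (hf : MeasurableEmbedding f) :
    Partitionable (μ.map f) := by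
  intro a ha
  obtain ⟨A, hA_meas, hA_disj, hA_meas_eq⟩ := hμ a ha
  refine ⟨fun n => f '' A n, fun n => hf.measurableSet_image.mpr (hA_meas n),
    fun m n hmn => (disjoint_image_iff hf.injective).mpr (hA_disj m n hmn), fun n => ?_⟩
  rw [hf.map_apply, hf.injective.preimage_image, hA_meas_eq]

theorem partitionable_count_prod {β : Type*} [MeasurableSpace β] (ν : Measure β) [SFinite ν]
    (hν : ∀ x : ℝ, 0 ≤ x → ∃ S, MeasurableSet S ∧ ν S = ENNReal.ofReal x) :
    Partitionable ((Measure.count : Measure ℕ).prod ν) := by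
  intro a ha
  choose S hS_meas hS_eq using fun n => hν (a n) (ha n)
  refine ⟨fun n => {n} ×ˢ S n, fun n => (measurableSet_singleton n).prod (hS_meas n),
    fun m n hmn => ?_, fun n => ?_⟩
  · exact disjoint_prod.mpr (Or.inl (disjoint_singleton.mpr hmn))
  · rw [Measure.prod_prod, Measure.count_singleton, one_mul, hS_eq]

noncomputable def twoZpowMeasure : Measure ℤ :=
  Measure.count.withDensity fun z => ENNReal.ofReal ((2 : ℝ) ^ z)

theorem exists_measurableSet_twoZpowMeasure_eq {x : ℝ} (hx : 0 ≤ x) :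
    ∃ S, MeasurableSet S ∧ twoZpowMeasure S = ENNReal.ofReal x := by
  obtain ⟨S, hS⟩ := exists_set_int_hasSum_indicator_two_zpow hx
  refine ⟨S, .of_discrete, ?_⟩
  rw [twoZpowMeasure, withDensity_apply _ .of_discrete, ← lintegral_indicator .of_discrete,
    lintegral_count, ← hS.tsum_eq, ENNReal.ofReal_tsum_of_nonneg _ hS.summable]
  · exact tsum_congr fun z => congrFun (indicator_comp_of_zero ENNReal.ofReal_zero) z
  · exact indicator_nonneg fun z _ => by positivity

theorem exists_partitionable_measure_on_nat :
    ∃ μ : Measure ℕ, Partitionable μ := by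
  let e : ℕ × ℤ ≃ ℕ := Denumerable.eqv (ℕ × ℤ)
  have he : MeasurableEmbedding e := ⟨e.injective, .of_discrete, fun _ _ => .of_discrete⟩
  exact ⟨_, (partitionable_count_prod twoZpowMeasure
    fun _ => exists_measurableSet_twoZpowMeasure_eq).map he⟩
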